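/- arXiv:1705.00457 — 6 statements merged into one kernel-verified Lean document; each statement's English description precedes it below -/
import Mathlib

section
/- Suppose that for all t > 0, λ^e(t)·(R^e_t g^e_+ − R^e_t g^e) + λ^d(t)·(R^d_t h^d_+ − R^d_t h^d) − λ^d(t)·(R^d_t h^d_− − R^d_t h^d) = (1/t)(f(X(t)) − f(X(0))). If f is bounded by M, then the right-hand side is bounded in absolute value by 2M/t, and in particular tends to 0 as t → ∞. Consequently, if λ^e(t) → λ^e, λ^d(t) → λ^d, R^e_t g^e → E^e f(X), R^e_t g^e_+ → E^e f(X+Y), R^d_t h^d → E^d f(X), R^d_t h^d_− → E^d f(X+Y), and R^d_t h^d_+ → E^d f(X+Z), then λ^e·(E^e f(X+Y) − E^e f(X)) + λ^d·(E^d f(X+Z) − E^d f(X)) = λ^d·(E^d f(X+Y) − E^d f(X)). -/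
open Filter Topology

/-- Lemma 4.1 combined with the limiting passage to Theorem 3.1: the transient
relationship holds with error `(1/t)(f(X(t)) - f(X(0)))` bounded by `2M/t`, and
convergence of all empirical rates and Cesàro averages yields the stationary
balance equation. -/
theorem stmt3 (M : ℝ) (F lamE lamD Re Rep Rd Rdm Rdp : ℝ → ℝ)
    (hF : ∀ t, |F t| ≤ M)
    (hid : ∀ t > (0 : ℝ),
      lamE t * (Rep t - Re t) + lamD t * (Rdp t - Rd t) - lamD t * (Rdm t - Rd t)
        = (1 / t) * (F t - F 0))
    (le ld EeX EeXY EdX EdXY EdXZ : ℝ)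
    (hle : Tendsto lamE atTop (𝓝 le))
    (hld : Tendsto lamD atTop (𝓝 ld))
    (hRe : Tendsto Re atTop (𝓝 EeX))
    (hRep : Tendsto Rep atTop (𝓝 EeXY))
    (hRd : Tendsto Rd atTop (𝓝 EdX))
    (hRdm : Tendsto Rdm atTop (𝓝 EdXY))
    (hRdp : Tendsto Rdp atTop (𝓝 EdXZ)) :
    (∀ t > (0 : ℝ), |(1 / t) * (F t - F 0)| ≤ 2 * M / t) ∧
    Tendsto (fun t => (1 / t) * (F t - F 0)) atTop (𝓝 0) ∧
    le * (EeXY - EeX) + ld * (EdXZ - EdX) = ld * (EdXY - EdX) := by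
  have hbound : ∀ t > (0 : ℝ), |(1 / t) * (F t - F 0)| ≤ 2 * M / t := by
    intro t ht
    rw [abs_mul]
    have h1 : |F t - F 0| ≤ 2 * M := by
      calc |F t - F 0| ≤ |F t| + |F 0| := abs_sub _ _
        _ ≤ M + M := add_le_add (hF t) (hF 0)
        _ = 2 * M := by ring
    have h2 : |1 / t| = 1 / t := abs_of_pos (by positivity)
    rw [h2]
    rw [div_eq_mul_inv (2 * M), mul_comm (2 * M), ← one_div]
    exact mul_le_mul_of_nonneg_left h1 (by positivity)
  have hM : 0 ≤ M := (abs_nonneg _).trans (hF 0)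
  have htend : Tendsto (fun t => (1 / t) * (F t - F 0)) atTop (𝓝 0) := by
    have hlow : ∀ᶠ t in atTop, -(2 * M / t) ≤ (1 / t) * (F t - F 0) := by
      filter_upwards [eventually_gt_atTop (0 : ℝ)] with t ht
      exact neg_le_of_abs_le (hbound t ht)
    have hup : ∀ᶠ t in atTop, (1 / t) * (F t - F 0) ≤ 2 * M / t := by
      filter_upwards [eventually_gt_atTop (0 : ℝ)] with t ht
      exact le_of_abs_le (hbound t ht)
    have h2M : Tendsto (fun t : ℝ => 2 * M / t) atTop (𝓝 0) :=
      tendsto_const_nhds.div_atTop tendsto_id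
    have hneg : Tendsto (fun t : ℝ => -(2 * M / t)) atTop (𝓝 0) := by
      simpa using h2M.neg
    exact tendsto_of_tendsto_of_tendsto_of_le_of_le' hneg h2M hlow hup
  refine ⟨hbound, htend, ?_⟩
  have hL : Tendsto
      (fun t => lamE t * (Rep t - Re t) + lamD t * (Rdp t - Rd t) - lamD t * (Rdm t - Rd t))
      atTop (𝓝 (le * (EeXY - EeX) + ld * (EdXZ - EdX) - ld * (EdXY - EdX))) :=
    ((hle.mul (hRep.sub hRe)).add (hld.mul (hRdp.sub hRd))).sub (hld.mul (hRdm.sub hRd))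
  have hL0 : Tendsto
      (fun t => lamE t * (Rep t - Re t) + lamD t * (Rdp t - Rd t) - lamD t * (Rdm t - Rd t))
      atTop (𝓝 0) := by
    apply htend.congr'
    filter_upwards [eventually_gt_atTop (0 : ℝ)] with t ht
    exact (hid t ht).symm
  have := tendsto_nhds_unique hL hL0
  linarith
end

section
/- Let Σ(z) = Σ_{j=1}^m λ_j(1−z_j), and suppose for i = 1,…,m the formal power series (or analytic functions on |z_j| ≤ 1) V^b_i, V^c_i, S^b_i, S^c_i satisfy: (1) γ_i·V^b_i(z) + S^c_i(z) = S^b_i(z) + γ_i·V^c_i(z) with γ_i = 1/(λ_i·E C); (2) S^c_i(z) = S^b_i(z)·B̃_i(Σ(z))/z_i; (3) V^b_{i+1}(z) = V^c_i(z)·S̃_i(Σ(z)) (indices mod m); and define L(z) = (1/EC)·Σ_i [ (b_i/γ_i)·S^b_i(z)·(1−B̃_i(Σ(z)))/(b_i·Σ(z)) + s_i·V^c_i(z)·(1−S̃_i(Σ(z)))/(s_i·Σ(z)) ]. Then L(z)·Σ_{i=1}^m λ_i(1−z_i) = Σ_{i=1}^m λ_i(1−z_i)·S^c_i(z), i.e.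 equation (2.8) of the paper holds. -/
/-!
Substituting the service relation `Sᶜ zᵢ = Sᵇ B̃ᵢ` turns the `i`-th term of `EC · L · Σ` into
`λᵢ EC (Sᵇᵢ - Sᶜᵢ zᵢ) + Vᶜᵢ (1 - S̃ᵢ)`. Summed over the cycle, the switchover relation makes
`∑ Vᶜᵢ S̃ᵢ = ∑ Vᵇᵢ`, and the Eisenberg relation turns `∑ (Vᶜᵢ - Vᵇᵢ)` into `∑ λᵢ EC (Sᶜᵢ - Sᵇᵢ)`;
the `Sᵇ` terms cancel and what is left is `EC ∑ λᵢ (1 - zᵢ) Sᶜᵢ`.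
-/

open Finset

theorem Fin.sum_eq_sum_of_comp_add_one {M : Type*} [AddCommMonoid M] {m : ℕ} [NeZero m]
    {f g : Fin m → M} (hg : ∀ i, g (i + 1) = f i) :
    ∑ i, f i = ∑ i, g i := by
  simp only [← hg]
  exact Equiv.sum_comp (Equiv.addRight 1) g

theorem sub_eq_div_of_mul_add_eq_add_mul {K : Type*} [Field K] {γ x y u v : K}
    (hγ : γ ≠ 0) (h : γ * x + u = v + γ * y) :
    y - x = (u - v) / γ := by
  rw [eq_div_iff hγ]
  linear_combination -h

theorem stmt7_general (m : ℕ) [NeZero m]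
    (lam b s : Fin m → ℝ) (EC : ℝ)
    (z Vb Vc Sb Sc Bt St : Fin m → ℝ)
    (hEC : EC ≠ 0) (hb : ∀ i, b i ≠ 0) (hs : ∀ i, s i ≠ 0)
    (hlam : ∀ i, lam i ≠ 0) (hz : ∀ i, z i ≠ 0)
    (Sig : ℝ) (hSig : Sig = ∑ j, lam j * (1 - z j)) (hSig0 : Sig ≠ 0)
    (γ : Fin m → ℝ) (hγ : ∀ i, γ i = 1 / (lam i * EC))
    (h1 : ∀ i, γ i * Vb i + Sc i = Sb i + γ i * Vc i)
    (h2 : ∀ i, Sc i = Sb i * Bt i / z i)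
    (h3 : ∀ i, Vb (i + 1) = Vc i * St i)
    (L : ℝ)
    (hL : L = (1 / EC) * ∑ i, ((b i / γ i) * Sb i * (1 - Bt i) / (b i * Sig)
        + s i * Vc i * (1 - St i) / (s i * Sig))) :
    L * ∑ i, lam i * (1 - z i) = ∑ i, lam i * (1 - z i) * Sc i := by
  have hvisit : ∀ i, Vc i - Vb i = lam i * EC * (Sc i - Sb i) := fun i => by
    rw [sub_eq_div_of_mul_add_eq_add_mul (by simp [hγ, hlam, hEC]) (h1 i), hγ,
      div_div_eq_mul_div, div_one, mul_comm]
  have hservice : ∀ i, Sb i * Bt i = Sc i * z i := fun i => by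
    rw [h2, div_mul_cancel₀ _ (hz i)]
  have hterm : ∀ i, (b i / γ i) * Sb i * (1 - Bt i) / (b i * Sig)
      + s i * Vc i * (1 - St i) / (s i * Sig)
      = (lam i * EC * (Sb i - Sc i * z i) + (Vc i - Vc i * St i)) / Sig := fun i => by
    rw [hγ, ← hservice]
    field_simp [hb i, hs i]
  have hcycle : ∑ i, (Vc i - Vc i * St i) = ∑ i, lam i * EC * (Sc i - Sb i) := by
    rw [sum_sub_distrib, Fin.sum_eq_sum_of_comp_add_one h3, ← sum_sub_distrib]
    exact sum_congr rfl fun i _ => hvisit i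
  calc L * ∑ i, lam i * (1 - z i)
      = (1 / EC) * ∑ i, (lam i * EC * (Sb i - Sc i * z i) + lam i * EC * (Sc i - Sb i)) := by
        rw [hL, ← hSig, sum_congr rfl fun i _ => hterm i, ← sum_div, sum_add_distrib, hcycle,
          ← sum_add_distrib]
        field_simp
    _ = ∑ i, lam i * (1 - z i) * Sc i := by
        rw [mul_sum]
        refine sum_congr rfl fun i _ => ?_
        field_simp
        ring

/-- Algebraic derivation of the simplified polling formula (2.8) from the
Eisenberg relation (2.2), the service relation (2.3), the switchover relation
(2.4) and the stochastic mean value theorem (2.5)-(2.7). -/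
theorem stmt7 (m : ℕ) [NeZero m] (hm : 1 ≤ m)
    (lam b s : Fin m → ℝ) (EC : ℝ)
    (z Vb Vc Sb Sc Bt St : Fin m → ℝ)
    (hEC : EC ≠ 0) (hb : ∀ i, b i ≠ 0) (hs : ∀ i, s i ≠ 0)
    (hlam : ∀ i, lam i ≠ 0) (hz : ∀ i, z i ≠ 0)
    (Sig : ℝ) (hSig : Sig = ∑ j, lam j * (1 - z j)) (hSig0 : Sig ≠ 0)
    (γ : Fin m → ℝ) (hγ : ∀ i, γ i = 1 / (lam i * EC))
    (h1 : ∀ i, γ i * Vb i + Sc i = Sb i + γ i * Vc i)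
    (h2 : ∀ i, Sc i = Sb i * Bt i / z i)
    (h3 : ∀ i, Vb (i + 1) = Vc i * St i)
    (L : ℝ)
    (hL : L = (1 / EC) * ∑ i, ((b i / γ i) * Sb i * (1 - Bt i) / (b i * Sig)
        + s i * Vc i * (1 - St i) / (s i * Sig))) :
    L * ∑ i, lam i * (1 - z i) = ∑ i, lam i * (1 - z i) * Sc i :=
  stmt7_general m lam b s EC z Vb Vc Sb Sc Bt St hEC hb hs hlam hz Sig hSig hSig0 γ hγ h1 h2 h3 L hL
end

section
/- Under the same hypotheses as the previous statement (relations (2.2), (2.3), (2.4) of the polling model and the definition of L via the stochastic mean value theorem), the joint queue-length PGF satisfies L(z) = (1/EC)·Σ_{i=1}^m [ (V^b_i(z) − V^c_i(z))/Σ(z) · z_i(1−B̃_i(Σ(z)))/(z_i − B̃_i(Σ(z))) + (V^c_i(z) − V^b_{i+1}(z))/Σ(z) ], i.e. equation (2.1) (Theorem 1 of Boxma–Kella–Kosiński) holds. -/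
open Finset

/-! The balance and service relations give `S^b_i (z_i - B̃_i) = γ_i z_i (V^b_i - V^c_i)`,
which turns the service term of the mean-value representation into the first summand of (2.1);
the switchover term becomes `(V^c_i - V^b_{i+1}) / Σ` since `V^b_{i+1} = V^c_i S̃_i`. -/

namespace Polling

variable {K : Type*} [Field K]

theorem serviceStart_eq {γ Vb Vc Sb Sc z B : K}
    (hbal : γ * Vb + Sc = Sb + γ * Vc) (hserv : Sc = Sb * B / z) (hz : z ≠ 0) (hzB : z ≠ B) :
    Sb = γ * (Vb - Vc) * z / (z - B) := by
  rw [eq_div_iff (sub_ne_zero.mpr hzB)]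
  rw [hserv] at hbal
  field_simp at hbal
  linear_combination -hbal

theorem serviceTerm_eq {b γ Vb Vc Sb z B Sig : K} (hb : b ≠ 0) (hγ : γ ≠ 0)
    (hSb : Sb = γ * (Vb - Vc) * z / (z - B)) :
    b / γ * Sb * (1 - B) / (b * Sig) = (Vb - Vc) / Sig * (z * (1 - B) / (z - B)) := by
  rw [hSb]
  field_simp

theorem switchoverTerm_eq {s Vc Vb' St Sig : K} (hs : s ≠ 0) (hVb' : Vb' = Vc * St) :
    s * Vc * (1 - St) / (s * Sig) = (Vc - Vb') / Sig := by
  rw [hVb', mul_assoc, mul_div_mul_left _ _ hs, mul_one_sub]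

end Polling

open Polling in
theorem stmt8_general (m : ℕ) [NeZero m]
    (lam b s : Fin m → ℝ) (EC : ℝ)
    (z Vb Vc Sb Sc Bt St : Fin m → ℝ)
    (hEC : EC ≠ 0) (hb : ∀ i, b i ≠ 0) (hs : ∀ i, s i ≠ 0)
    (hlam : ∀ i, lam i ≠ 0) (hz : ∀ i, z i ≠ 0)
    (hzB : ∀ i, z i ≠ Bt i)
    (Sig : ℝ)
    (γ : Fin m → ℝ) (hγ : ∀ i, γ i = 1 / (lam i * EC))
    (h1 : ∀ i, γ i * Vb i + Sc i = Sb i + γ i * Vc i)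
    (h2 : ∀ i, Sc i = Sb i * Bt i / z i)
    (h3 : ∀ i, Vb (i + 1) = Vc i * St i)
    (L : ℝ)
    (hL : L = (1 / EC) * ∑ i, ((b i / γ i) * Sb i * (1 - Bt i) / (b i * Sig)
        + s i * Vc i * (1 - St i) / (s i * Sig))) :
    L = (1 / EC) * ∑ i, ((Vb i - Vc i) / Sig * (z i * (1 - Bt i) / (z i - Bt i))
        + (Vc i - Vb (i + 1)) / Sig) := by
  rw [hL]
  congr 1
  refine Finset.sum_congr rfl fun i _ => ?_
  have hγ0 : γ i ≠ 0 := by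
    rw [hγ i]
    exact one_div_ne_zero (mul_ne_zero (hlam i) hEC)
  rw [serviceTerm_eq (hb i) hγ0 (serviceStart_eq (h1 i) (h2 i) (hz i) (hzB i)),
    switchoverTerm_eq (hs i) (h3 i)]

/-- Equation (2.1) (Theorem 1 of Boxma–Kella–Kosiński): the joint queue-length PGF
in terms of the visit-beginning and visit-completion PGFs. -/
theorem stmt8 (m : ℕ) [NeZero m] (hm : 1 ≤ m)
    (lam b s : Fin m → ℝ) (EC : ℝ)
    (z Vb Vc Sb Sc Bt St : Fin m → ℝ)
    (hEC : EC ≠ 0) (hb : ∀ i, b i ≠ 0) (hs : ∀ i, s i ≠ 0)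
    (hlam : ∀ i, lam i ≠ 0) (hz : ∀ i, z i ≠ 0)
    (hzB : ∀ i, z i ≠ Bt i)
    (Sig : ℝ) (hSig : Sig = ∑ j, lam j * (1 - z j)) (hSig0 : Sig ≠ 0)
    (γ : Fin m → ℝ) (hγ : ∀ i, γ i = 1 / (lam i * EC))
    (h1 : ∀ i, γ i * Vb i + Sc i = Sb i + γ i * Vc i)
    (h2 : ∀ i, Sc i = Sb i * Bt i / z i)
    (h3 : ∀ i, Vb (i + 1) = Vc i * St i)
    (L : ℝ)
    (hL : L = (1 / EC) * ∑ i, ((b i / γ i) * Sb i * (1 - Bt i) / (b i * Sig)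
        + s i * Vc i * (1 - St i) / (s i * Sig))) :
    L = (1 / EC) * ∑ i, ((Vb i - Vc i) / Sig * (z i * (1 - Bt i) / (z i - Bt i))
        + (Vc i - Vb (i + 1)) / Sig) :=
  stmt8_general m lam b s EC z Vb Vc Sb Sc Bt St hEC hb hs hlam hz hzB Sig γ hγ h1 h2 h3 L hL
end

section
/- Under the same framework as the previous statement, but with batch services: class-i customers depart in batches of fixed size K_i ≥ 1 (so under E^d_i, Y = K_i·e_i deterministically), and the departure-epoch rate satisfies λ^d_i·K_i = λ·E[G_i]. Then the generating-function balance equation becomes (1 − E[z^G])·L(z) = Σ_{i=1}^m ((1 − z_i^{K_i})/K_i)·E[G_i]·S^c_i(z). -/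
open Finset

/- With `f(x) = z^x`, a class-`i` departure multiplies the queue-length PGF by `z_i^{K_i}`, so each
departure term of the rate-balance relation is `λ^d_i (z_i^{K_i} - 1) S^c_i(z)`; substituting
`λ^d_i = λ E[G_i] / K_i` makes every term, like the arrival side, a multiple of `λ`, which cancels. -/

theorem batch_departure_term_eq {F : Type*} [Field F] [CharZero F]
    {lam lamd EG z S : F} {K : ℕ} (hrate : lamd * K = lam * EG) :
    lamd * (z ^ K * S - S) = -(lam * ((1 - z ^ K) / K * EG * S)) := by
  rcases eq_or_ne K 0 with rfl | hK
  · -- both sides vanish: `z ^ 0 = 1`, and the division by `(0 : F)` is `0`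
    simp
  · have hKF : (K : F) ≠ 0 := Nat.cast_ne_zero.mpr hK
    field_simp
    linear_combination (z ^ K * S - S) * hrate

theorem stmt10_general (m : ℕ) (lam : ℝ) (hlam : 0 < lam)
    (z : Fin m → ℝ)
    (Ghat Lz : ℝ) (EG : Fin m → ℝ) (lamd Sc : Fin m → ℝ)
    (K : Fin m → ℕ)
    (EeXY EeX : ℝ) (EdXY EdX : Fin m → ℝ)
    (hbal : lam * (EeXY - EeX) = ∑ i, lamd i * (EdXY i - EdX i))
    (hEeXY : EeXY = Ghat * Lz) (hEeX : EeX = Lz)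
    (hEdXY : ∀ i, EdXY i = z i ^ (K i) * Sc i) (hEdX : ∀ i, EdX i = Sc i)
    (hrate : ∀ i, lamd i * (K i : ℝ) = lam * EG i) :
    (1 - Ghat) * Lz = ∑ i, ((1 - z i ^ (K i)) / (K i : ℝ)) * EG i * Sc i := by
  simp only [hEeXY, hEeX, hEdXY, hEdX, batch_departure_term_eq (hrate _), sum_neg_distrib,
    ← mul_sum] at hbal
  have hcancel : Ghat * Lz - Lz = -∑ i, (1 - z i ^ K i) / K i * EG i * Sc i :=
    mul_left_cancel₀ hlam.ne' (hbal.trans (mul_neg lam _).symm)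
  linarith

/-- Theorem 5.2: batch services of fixed class sizes `K_i`; the balance equation
becomes `(1 - E[z^G])·L(z) = Σ_i ((1-z_i^{K_i})/K_i)·E[G_i]·S^c_i(z)`. -/
theorem stmt10 (m : ℕ) (lam : ℝ) (hlam : 0 < lam)
    (z : Fin m → ℝ) (hz : ∀ j, |z j| ≤ 1)
    (Ghat Lz : ℝ) (EG : Fin m → ℝ) (lamd Sc : Fin m → ℝ)
    (K : Fin m → ℕ) (hK : ∀ i, 1 ≤ K i)
    (EeXY EeX : ℝ) (EdXY EdX : Fin m → ℝ)
    (hbal : lam * (EeXY - EeX) = ∑ i, lamd i * (EdXY i - EdX i))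
    (hEeXY : EeXY = Ghat * Lz) (hEeX : EeX = Lz)
    (hEdXY : ∀ i, EdXY i = z i ^ (K i) * Sc i) (hEdX : ∀ i, EdX i = Sc i)
    (hrate : ∀ i, lamd i * (K i : ℝ) = lam * EG i) :
    (1 - Ghat) * Lz = ∑ i, ((1 - z i ^ (K i)) / (K i : ℝ)) * EG i * Sc i :=
  stmt10_general m lam hlam z Ghat Lz EG lamd Sc K EeXY EeX EdXY EdX hbal hEeXY hEeX hEdXY hEdX
    hrate
end

section
/- Let Σ(z), B̃_i(·), relations as in the polling model, and additionally a routing polynomial P_i(z) = p_{i0} + Σ_{k=1}^m p_{ik}·z_k with p_{i0} + Σ_k p_{ik} = 1. Suppose: (1) (V^b_i(z) − V^c_i(z))/(Λ_i·EC) = S^b_i(z) − S^c_i(z)·P_i(z) for i = 1,…,m; (2) S^c_i(z) = S^b_i(z)·B̃_i(Σ(z))/z_i; (3) V^b_{i+1}(z) = V^c_i(z)·S̃_i(Σ(z)); and L(z) is defined by the same stochastic mean value formula as in the polling model with Λ_i replacing λ_i in the visit weights, Σ(z) = Σ_j λ_j(1−z_j). Then Σ_{i=1}^m λ_i(1−z_i)·L(z)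 = Σ_{i=1}^m Λ_i·(P_i(z) − z_i)·S^c_i(z). -/
/-!
Multiplying the mean value formula by `Σ(z)` turns `Σ(z) L(z)` into `1/EC` times the sum over
the queues of `Λ_i EC S^b_i (1 - B̃_i) + V^c_i (1 - S̃_i)`. By the switchover relation the
switchover terms telescope around the cycle to `Σ_i (V^c_i - V^b_i)`, and the Eisenberg relation
together with the service relation `S^b_i B̃_i = z_i S^c_i` turns each summand into
`EC Λ_i (P_i - z_i) S^c_i`.
-/

open Finset

theorem sum_mul_one_sub_eq_sum_sub_of_cyclic {R : Type*} [CommRing R] {m : ℕ} [NeZero m]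
    {Vb Vc St : Fin m → R} (h : ∀ i, Vb (i + 1) = Vc i * St i) :
    ∑ i, Vc i * (1 - St i) = ∑ i, (Vc i - Vb i) := by
  have hshift : ∑ i, Vb (i + 1) = ∑ i, Vb i := Equiv.sum_comp (Equiv.addRight 1) Vb
  simp only [mul_one_sub, sum_sub_distrib, ← h, hshift]

theorem eisenberg_service_elim {K : Type*} [Field K] {Λ EC Vb Vc Sb Sc Bt P z : K}
    (hΛEC : Λ * EC ≠ 0) (hz : z ≠ 0)
    (hEisenberg : (Vb - Vc) / (Λ * EC) = Sb - Sc * P) (hService : Sc = Sb * Bt / z) :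
    Λ * EC * Sb * (1 - Bt) + Vc - Vb = EC * (Λ * (P - z) * Sc) := by
  have hV : Vb - Vc = (Sb - Sc * P) * (Λ * EC) := (div_eq_iff hΛEC).1 hEisenberg
  have hSc : Sb * Bt = Sc * z := by rw [hService, div_mul_cancel₀ _ hz]
  linear_combination -hV - Λ * EC * hSc

theorem mean_value_summand_eq {K : Type*} [Field K] {b s Sig x y : K} (hb : b ≠ 0) (hs : s ≠ 0) :
    b * x / (b * Sig) + s * y / (s * Sig) = (x + y) / Sig := by
  rw [mul_div_mul_left _ _ hb, mul_div_mul_left _ _ hs, add_div]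

theorem stmt12_general (m : ℕ) [NeZero m]
    (lam Lam b s : Fin m → ℝ) (EC : ℝ)
    (z Vb Vc Sb Sc Bt St : Fin m → ℝ)
    (hEC : EC ≠ 0) (hb : ∀ i, b i ≠ 0) (hs : ∀ i, s i ≠ 0)
    (hLam : ∀ i, Lam i ≠ 0) (hz : ∀ i, z i ≠ 0)
    (Pp : Fin m → ℝ)
    (Sig : ℝ) (hSig : Sig = ∑ j, lam j * (1 - z j)) (hSig0 : Sig ≠ 0)
    (h1 : ∀ i, (Vb i - Vc i) / (Lam i * EC) = Sb i - Sc i * Pp i)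
    (h2 : ∀ i, Sc i = Sb i * Bt i / z i)
    (h3 : ∀ i, Vb (i + 1) = Vc i * St i)
    (L : ℝ)
    (hL : L = (1 / EC) * ∑ i, (Lam i * EC * b i * Sb i * (1 - Bt i) / (b i * Sig)
        + s i * Vc i * (1 - St i) / (s i * Sig))) :
    ∑ i, lam i * (1 - z i) * L = ∑ i, Lam i * (Pp i - z i) * Sc i := by
  have hsummand : ∀ i, Lam i * EC * b i * Sb i * (1 - Bt i) / (b i * Sig)
      + s i * Vc i * (1 - St i) / (s i * Sig)
      = (Lam i * EC * Sb i * (1 - Bt i) + Vc i * (1 - St i)) / Sig := fun i => by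
    rw [← mean_value_summand_eq (hb i) (hs i)]
    ring
  have hterm : ∀ i, Lam i * EC * Sb i * (1 - Bt i) + (Vc i - Vb i)
      = EC * (Lam i * (Pp i - z i) * Sc i) := fun i => by
    rw [← add_sub_assoc]
    exact eisenberg_service_elim (mul_ne_zero (hLam i) hEC) (hz i) (h1 i) (h2 i)
  calc ∑ i, lam i * (1 - z i) * L = Sig * L := by rw [← sum_mul, hSig]
    _ = (1 / EC) * ∑ i, (Lam i * EC * Sb i * (1 - Bt i) + Vc i * (1 - St i)) := by
      rw [hL, sum_congr rfl fun i _ => hsummand i, ← sum_div]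
      field_simp
    _ = (1 / EC) * ∑ i, (Lam i * EC * Sb i * (1 - Bt i) + (Vc i - Vb i)) := by
      rw [sum_add_distrib, sum_mul_one_sub_eq_sum_sub_of_cyclic h3, ← sum_add_distrib]
    _ = ∑ i, Lam i * (Pp i - z i) * Sc i := by
      simp only [hterm, ← mul_sum]
      field_simp

/-- Roving-server derivation (Case 5, equation (5.9)): from the generalized
Eisenberg relation (5.10), the service relation, the switchover relation and the
mean value representation of `L`, derive
`Σ_i λ_i(1-z_i)·L(z) = Σ_i Λ_i·(P_i(z) - z_i)·S^c_i(z)`. -/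
theorem stmt12 (m : ℕ) [NeZero m] (hm : 1 ≤ m)
    (lam Lam b s : Fin m → ℝ) (EC : ℝ)
    (z Vb Vc Sb Sc Bt St : Fin m → ℝ)
    (hEC : EC ≠ 0) (hb : ∀ i, b i ≠ 0) (hs : ∀ i, s i ≠ 0)
    (hLam : ∀ i, Lam i ≠ 0) (hz : ∀ i, z i ≠ 0)
    (p0 : Fin m → ℝ) (p : Fin m → Fin m → ℝ)
    (hp1 : ∀ i, p0 i + ∑ k, p i k = 1)
    (Pp : Fin m → ℝ) (hPp : ∀ i, Pp i = p0 i + ∑ k, p i k * z k)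
    (Sig : ℝ) (hSig : Sig = ∑ j, lam j * (1 - z j)) (hSig0 : Sig ≠ 0)
    (h1 : ∀ i, (Vb i - Vc i) / (Lam i * EC) = Sb i - Sc i * Pp i)
    (h2 : ∀ i, Sc i = Sb i * Bt i / z i)
    (h3 : ∀ i, Vb (i + 1) = Vc i * St i)
    (L : ℝ)
    (hL : L = (1 / EC) * ∑ i, (Lam i * EC * b i * Sb i * (1 - Bt i) / (b i * Sig)
        + s i * Vc i * (1 - St i) / (s i * Sig))) :
    ∑ i, lam i * (1 - z i) * L = ∑ i, Lam i * (Pp i - z i) * Sc i :=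
  stmt12_general m lam Lam b s EC z Vb Vc Sb Sc Bt St hEC hb hs hLam hz Pp Sig hSig hSig0 h1 h2 h3 L
    hL
end

section
/- Under the assumptions of the previous statement, suppose additionally that for each i the routing variable Z is independent of X under E^d_i, with P(Z = e_j) = p_{ij} and P(Z = 0) = p_{i0} = 1 − Σ_j p_{ij}, so that φ^d_{ij}(z) = φ^d_i(z)·p_{ij}. Then the balance equation becomes Σ_{k∈J} λ^e_k·(1 − E^e[z_k^{Y_k}])·φ^e_k(z) + Σ_{i∈J} λ^d_i·φ^d_i(z)·Σ_{j∈J} p_{ij}·(1−z_j) = Σ_{i∈J} λ^d_i·(1−z_i)·φ^d_i(z), where additionally external arrivals occur one queue at a time with per-queue rates λ^e_k and per-queue pre-arrival PGFs φ^e_k. -/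
open Finset

/- The departure term of one queue in the balance equation, after substituting
`φ^d_{ij} = φ^d_i · p_{ij}`. -/
theorem routing_balance_term {ι R : Type*} [Fintype ι] [CommRing R] (φ : R) (p z : ι → R) :
    (∑ j, z j * (φ * p j)) + (φ - ∑ j, φ * p j) - φ = -(φ * ∑ j, p j * (1 - z j)) := by
  have expand : ∑ j, p j * (1 - z j) = ∑ j, p j - ∑ j, z j * p j := by
    rw [← sum_sub_distrib]; exact sum_congr rfl fun j _ => by ring
  simp only [mul_left_comm (z _) φ, ← mul_sum, expand]
  ring

theorem stmt16_general (m : ℕ) (z : Fin m → ℝ)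
    (lamek EezYk phiek EekXY : Fin m → ℝ)
    (lamd phid EdXY EdXZ : Fin m → ℝ)
    (p : Fin m → Fin m → ℝ)
    (phidij : Fin m → Fin m → ℝ)
    (hrout : ∀ i j, phidij i j = phid i * p i j)
    (hbal : (∑ k, lamek k * (EekXY k - phiek k)) + ∑ i, lamd i * (EdXZ i - phid i)
      = ∑ i, lamd i * (EdXY i - phid i))
    (hindk : ∀ k, EekXY k = EezYk k * phiek k)
    (hY : ∀ i, EdXY i = z i * phid i)
    (hZ : ∀ i, EdXZ i = (∑ j, z j * phidij i j) + (phid i - ∑ j, phidij i j)) :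
    (∑ k, lamek k * (1 - EezYk k) * phiek k)
      + ∑ i, lamd i * phid i * ∑ j, p i j * (1 - z j)
      = ∑ i, lamd i * (1 - z i) * phid i := by
  have arrivals (k : Fin m) :
      lamek k * (EekXY k - phiek k) = -(lamek k * (1 - EezYk k) * phiek k) := by
    rw [hindk]; ring
  have departures (i : Fin m) :
      lamd i * (EdXZ i - phid i) = -(lamd i * phid i * ∑ j, p i j * (1 - z j)) := by
    simp only [hZ, hrout, routing_balance_term]; ring
  have services (i : Fin m) :
      lamd i * (EdXY i - phid i) = -(lamd i * (1 - z i) * phid i) := by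
    rw [hY]; ring
  simp only [arrivals, departures, services, sum_neg_distrib] at hbal
  linarith

/-- Corollary 3.4 (equation (3.17)): Markovian-routing specialization, with
routing independent of the pre-departure history (`φ^d_{ij} = p_{ij}·φ^d_i`) and
single (non-simultaneous) external arrivals at each queue. -/
theorem stmt16 (m : ℕ) (z : Fin m → ℝ) (hz : ∀ j, |z j| ≤ 1)
    (lamek EezYk phiek EekXY : Fin m → ℝ)
    (lamd phid EdXY EdXZ : Fin m → ℝ)
    (p : Fin m → Fin m → ℝ) (p0 : Fin m → ℝ)
    (hpnn : ∀ i j, 0 ≤ p i j)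
    (hp0 : ∀ i, p0 i = 1 - ∑ j, p i j)
    (phidij : Fin m → Fin m → ℝ)
    (hrout : ∀ i j, phidij i j = phid i * p i j)
    (hbal : (∑ k, lamek k * (EekXY k - phiek k)) + ∑ i, lamd i * (EdXZ i - phid i)
      = ∑ i, lamd i * (EdXY i - phid i))
    (hindk : ∀ k, EekXY k = EezYk k * phiek k)
    (hY : ∀ i, EdXY i = z i * phid i)
    (hZ : ∀ i, EdXZ i = (∑ j, z j * phidij i j) + (phid i - ∑ j, phidij i j)) :
    (∑ k, lamek k * (1 - EezYk k) * phiek k)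
      + ∑ i, lamd i * phid i * ∑ j, p i j * (1 - z j)
      = ∑ i, lamd i * (1 - z i) * phid i :=
  stmt16_general m z lamek EezYk phiek EekXY lamd phid EdXY EdXZ p phidij hrout hbal hindk hY hZ
end
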